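/- Let A be a bounded self-adjoint operator with A² = 1, and let (D_λ)_{λ>0} be self-adjoint operators of the form D_λ = D + λA with D self-adjoint (bounded), ‖DA + AD‖ ≤ C. Then for every vector ω, B_λ ω → Aω as λ → ∞, where B_λ = D_λ(1 + D_λ²)^{-1/2}. -/

import Mathlib

/-!
Write `D_λ = D + λA` and `R_λ = (1 + D_λ²)^{-1/2}`, so that `B_λ - A = D R_λ + A (λ R_λ - 1)`.
Since `A² = 1`, `D_λ² - λ² = D² + λ(DA + AD)` has norm `O(λ)`, so the spectrum of `D_λ`
lies where `|x² - λ²| = O(λ)`. On that set `(1 + x²)^{-1/2} = O(1/λ)` and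
`|λ (1 + x²)^{-1/2} - 1| = O(1/λ)`, so by the functional calculus `‖B_λ - A‖ = O(1/λ)`:
the convergence even holds in operator norm.
-/

open Filter Topology

/-- The bounded transform `T ↦ T(1 + T²)^{-1/2}`, via the continuous functional calculus. -/
noncomputable def boundedTransform {H : Type*} [NormedAddCommGroup H] [InnerProductSpace ℂ H]
    [CompleteSpace H] (T : H →L[ℂ] H) : H →L[ℂ] H :=
  cfc (fun x : ℝ => x * (Real.sqrt (1 + x ^ 2))⁻¹) T

section Real

lemma continuous_inv_sqrt_one_add_sq : Continuous fun x : ℝ => (Real.sqrt (1 + x ^ 2))⁻¹ :=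
  Continuous.inv₀ (by fun_prop) fun x => (Real.sqrt_pos.2 (by positivity)).ne'

variable {x lam δ : ℝ}

lemma half_le_sqrt_one_add_sq (hx : |x ^ 2 - lam ^ 2| ≤ δ)
    (hδ : 4 * δ ≤ 3 * lam ^ 2) : lam / 2 ≤ Real.sqrt (1 + x ^ 2) := by
  apply Real.le_sqrt_of_sq_le
  nlinarith [neg_abs_le (x ^ 2 - lam ^ 2)]

lemma inv_sqrt_one_add_sq_le (hlam : 0 < lam) (hx : |x ^ 2 - lam ^ 2| ≤ δ)
    (hδ : 4 * δ ≤ 3 * lam ^ 2) : (Real.sqrt (1 + x ^ 2))⁻¹ ≤ 2 / lam := by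
  rw [← inv_div]
  exact inv_anti₀ (by positivity) (half_le_sqrt_one_add_sq hx hδ)

lemma abs_mul_inv_sqrt_one_add_sq_sub_one_le (hlam : 0 < lam) (hx : |x ^ 2 - lam ^ 2| ≤ δ)
    (hδ : 4 * δ ≤ 3 * lam ^ 2) :
    |lam * (Real.sqrt (1 + x ^ 2))⁻¹ - 1| ≤ 2 * (δ + 1) / lam ^ 2 := by
  set s := Real.sqrt (1 + x ^ 2)
  have hs : lam / 2 ≤ s := half_le_sqrt_one_add_sq hx hδ
  have hs0 : 0 < s := by linarith
  have hs2 : s ^ 2 = 1 + x ^ 2 := Real.sq_sqrt (by positivity)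
  have hnum : |lam ^ 2 - s ^ 2| ≤ δ + 1 := by
    rw [hs2]
    calc |lam ^ 2 - (1 + x ^ 2)| = |(x ^ 2 - lam ^ 2) + 1| := by
          rw [← abs_neg]; ring_nf
      _ ≤ |x ^ 2 - lam ^ 2| + |1| := abs_add_le _ _
      _ ≤ δ + 1 := by rw [abs_one]; linarith
  have hden : lam ^ 2 / 2 ≤ s * (lam + s) := by nlinarith
  calc |lam * s⁻¹ - 1| = |lam ^ 2 - s ^ 2| / (s * (lam + s)) := by
        rw [← abs_of_pos (by positivity : 0 < s * (lam + s)), ← abs_div]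
        congr 1
        field_simp
        ring
    _ ≤ (δ + 1) / (lam ^ 2 / 2) := by
        gcongr
        · linarith [abs_nonneg (lam ^ 2 - s ^ 2)]
    _ = 2 * (δ + 1) / lam ^ 2 := by field_simp

end Real

section CStar

variable {𝒜 : Type*} [CStarAlgebra 𝒜]

lemma abs_sq_sub_le_norm_of_mem_spectrum {a : 𝒜} (ha : IsSelfAdjoint a) (c : ℝ) {x : ℝ}
    (hx : x ∈ spectrum ℝ a) : |x ^ 2 - c| ≤ ‖a ^ 2 - algebraMap ℝ 𝒜 c‖ := by
  have h := norm_apply_le_norm_cfc (fun y : ℝ => y ^ 2 - c) a hx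
  rwa [cfc_sub _ _ a, cfc_pow_id a 2, cfc_const c a] at h

variable {a : 𝒜} {lam δ : ℝ}

lemma norm_cfc_inv_sqrt_one_add_sq_le (ha : IsSelfAdjoint a) (hlam : 0 < lam)
    (haδ : ‖a ^ 2 - algebraMap ℝ 𝒜 (lam ^ 2)‖ ≤ δ) (hδ : 4 * δ ≤ 3 * lam ^ 2) :
    ‖cfc (fun x : ℝ => (Real.sqrt (1 + x ^ 2))⁻¹) a‖ ≤ 2 / lam := by
  refine norm_cfc_le (by positivity) fun x hx => ?_
  have hx' := (abs_sq_sub_le_norm_of_mem_spectrum ha _ hx).trans haδ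
  rw [Real.norm_of_nonneg (by positivity)]
  exact inv_sqrt_one_add_sq_le hlam hx' hδ

lemma norm_smul_cfc_inv_sqrt_one_add_sq_sub_one_le (ha : IsSelfAdjoint a) (hlam : 0 < lam)
    (haδ : ‖a ^ 2 - algebraMap ℝ 𝒜 (lam ^ 2)‖ ≤ δ) (hδ : 4 * δ ≤ 3 * lam ^ 2) :
    ‖lam • cfc (fun x : ℝ => (Real.sqrt (1 + x ^ 2))⁻¹) a - 1‖ ≤ 2 * (δ + 1) / lam ^ 2 := by
  have hcont := continuous_inv_sqrt_one_add_sq.continuousOn (s := spectrum ℝ a)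
  have hδ0 : 0 ≤ δ := (norm_nonneg _).trans haδ
  rw [← cfc_const_mul _ _ a, ← cfc_one ℝ a, ← cfc_sub _ _ a]
  refine norm_cfc_le (by positivity) fun x hx => ?_
  have hx' := (abs_sq_sub_le_norm_of_mem_spectrum ha _ hx).trans haδ
  exact abs_mul_inv_sqrt_one_add_sq_sub_one_le hlam hx' hδ

end CStar

section Perturbation

lemma add_smul_sq_sub_algebraMap {R 𝒜 : Type*} [CommRing R] [Ring 𝒜] [Algebra R 𝒜] {D A : 𝒜}
    (hA2 : A * A = 1) (lam : R) :
    (D + lam • A) ^ 2 - algebraMap R 𝒜 (lam ^ 2) = D * D + lam • (D * A + A * D) := by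
  rw [sq, Algebra.algebraMap_eq_smul_one]
  simp only [add_mul, mul_add, smul_mul_assoc, mul_smul_comm, hA2]
  module

variable {𝒜 : Type*} [NormedRing 𝒜] [NormedAlgebra ℝ 𝒜] {D A : 𝒜}

lemma norm_add_smul_sq_sub_algebraMap_le (hA2 : A * A = 1) {C lam : ℝ}
    (hDA : ‖D * A + A * D‖ ≤ C) (hlam : 0 ≤ lam) :
    ‖(D + lam • A) ^ 2 - algebraMap ℝ 𝒜 (lam ^ 2)‖ ≤ ‖D‖ ^ 2 + lam * C := by
  rw [add_smul_sq_sub_algebraMap hA2, sq]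
  calc ‖D * D + lam • (D * A + A * D)‖ ≤ ‖D‖ * ‖D‖ + lam * ‖D * A + A * D‖ := by
        refine (norm_add_le _ _).trans (add_le_add (norm_mul_le _ _) ?_)
        rw [norm_smul, Real.norm_of_nonneg hlam]
    _ ≤ ‖D‖ * ‖D‖ + lam * C := by gcongr

end Perturbation

section BoundedTransform

variable {H : Type*} [NormedAddCommGroup H] [InnerProductSpace ℂ H] [CompleteSpace H]

lemma boundedTransform_eq_mul {T : H →L[ℂ] H} (hT : IsSelfAdjoint T) :
    boundedTransform T = T * cfc (fun x : ℝ => (Real.sqrt (1 + x ^ 2))⁻¹) T := by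
  rw [boundedTransform, cfc_mul _ _ T (by fun_prop) continuous_inv_sqrt_one_add_sq.continuousOn,
    cfc_id' ℝ T]

variable {D A : H →L[ℂ] H} {C : ℝ}

lemma norm_boundedTransform_add_smul_sub_le (hD : IsSelfAdjoint D) (hA : IsSelfAdjoint A)
    (hA2 : A * A = 1) (hDA : ‖D * A + A * D‖ ≤ C) {lam : ℝ} (hlam : 0 < lam)
    (hδ : 4 * (‖D‖ ^ 2 + lam * C) ≤ 3 * lam ^ 2) :
    ‖boundedTransform (D + lam • A) - A‖
      ≤ ‖D‖ * (2 / lam) + ‖A‖ * (2 * (‖D‖ ^ 2 + lam * C + 1) / lam ^ 2) := by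
  have hT : IsSelfAdjoint (D + lam • A) := hD.add ((IsSelfAdjoint.all lam).smul hA)
  have hsq := norm_add_smul_sq_sub_algebraMap_le hA2 hDA hlam.le
  set R := cfc (fun x : ℝ => (Real.sqrt (1 + x ^ 2))⁻¹) (D + lam • A)
  have hsplit : boundedTransform (D + lam • A) - A = D * R + A * (lam • R - 1) := by
    rw [boundedTransform_eq_mul hT, add_mul, mul_sub, mul_one, smul_mul_assoc, mul_smul_comm]
    abel
  calc ‖boundedTransform (D + lam • A) - A‖ = ‖D * R + A * (lam • R - 1)‖ := by rw [hsplit]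
    _ ≤ ‖D‖ * ‖R‖ + ‖A‖ * ‖lam • R - 1‖ :=
        (norm_add_le _ _).trans (add_le_add (norm_mul_le _ _) (norm_mul_le _ _))
    _ ≤ _ := by
        gcongr
        · exact norm_cfc_inv_sqrt_one_add_sq_le hT hlam hsq hδ
        · exact norm_smul_cfc_inv_sqrt_one_add_sq_sub_one_le hT hlam hsq hδ

theorem tendsto_boundedTransform_add_smul (hD : IsSelfAdjoint D) (hA : IsSelfAdjoint A)
    (hA2 : A * A = 1) (hDA : ‖D * A + A * D‖ ≤ C) :
    Tendsto (fun lam : ℝ => boundedTransform (D + lam • A)) atTop (𝓝 A) := by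
  set ε : ℝ → ℝ := fun lam => (‖D‖ ^ 2 + lam * C + 1) / lam ^ 2
  have hε : Tendsto ε atTop (𝓝 0) := by
    have h := ((tendsto_inv_atTop_zero.pow 2).const_mul (‖D‖ ^ 2 + 1)).add
      (tendsto_inv_atTop_zero.const_mul C)
    rw [zero_pow two_ne_zero, mul_zero, mul_zero, add_zero] at h
    refine h.congr' ?_
    filter_upwards [eventually_gt_atTop 0] with lam hlam
    simp only [ε]
    field_simp
    ring
  have hbound : Tendsto (fun lam => ‖D‖ * (2 / lam) + ‖A‖ * (2 * ε lam)) atTop (𝓝 0) := by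
    simpa using ((tendsto_const_nhds.div_atTop tendsto_id).const_mul ‖D‖).add
      ((hε.const_mul 2).const_mul ‖A‖)
  rw [tendsto_iff_norm_sub_tendsto_zero]
  refine squeeze_zero' (.of_forall fun _ => norm_nonneg _) ?_ hbound
  filter_upwards [eventually_gt_atTop 0,
    hε.eventually (eventually_le_nhds (by norm_num : (0 : ℝ) < 3 / 4))] with lam hlam hεlam
  have hδ : 4 * (‖D‖ ^ 2 + lam * C) ≤ 3 * lam ^ 2 := by
    simp only [ε] at hεlam
    rw [div_le_iff₀ (by positivity)] at hεlam
    linarith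
  simpa only [ε, mul_div_assoc] using
    norm_boundedTransform_add_smul_sub_le hD hA hA2 hDA hlam hδ

end BoundedTransform

/-- If `A` is bounded self-adjoint with `A² = 1`, `D` is bounded self-adjoint with
`‖DA + AD‖ ≤ C`, and `D_λ = D + λA`, then the bounded transforms
`B_λ = D_λ(1 + D_λ²)^{-1/2}` converge strongly to `A` as `λ → ∞`. -/
theorem stmt_10 {H : Type*} [NormedAddCommGroup H] [InnerProductSpace ℂ H] [CompleteSpace H]
    (D A : H →L[ℂ] H) (hD : IsSelfAdjoint D) (hA : IsSelfAdjoint A)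
    (hA2 : A * A = 1) (C : ℝ) (hDA : ‖D * A + A * D‖ ≤ C) (ω : H) :
    Filter.Tendsto (fun lam : ℝ => boundedTransform (D + lam • A) ω)
      Filter.atTop (nhds (A ω)) :=
  ((continuous_eval_const ω).tendsto A).comp (tendsto_boundedTransform_add_smul hD hA hA2 hDA)
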